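/- arXiv:1003.1517 — 5 statements merged into one kernel-verified Lean document; each statement's English description precedes it below -/
import Mathlib

section
/- Let f : 2^Ω → ℝ≥0 be submodular with f(∅) = 0, let X ⊆ Ω, and let S be the output of the greedy algorithm that starts with S = ∅ and for k steps adds an element of X maximizing the marginal value f(S ∪ {e}) − f(S). Then for any set C ⊆ X with |C| ≤ k, f(S) ≥ (1/2)·f(S ∪ C). -/
open Finset

def Submodular {Ω : Type*} [DecidableEq Ω] (f : Finset Ω → ℝ) : Prop :=
  ∀ S T : Finset Ω, f (S ∪ T) + f (S ∩ T) ≤ f S + f T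

lemma marg_anti {Ω : Type*} [DecidableEq Ω] {f : Finset Ω → ℝ} (hsub : Submodular f)
    {A B : Finset Ω} (hAB : A ⊆ B) {x : Ω} (hx : x ∉ B) :
    f (insert x B) - f B ≤ f (insert x A) - f A := by
  have h := hsub (insert x A) B
  have h1 : insert x A ∪ B = insert x B := by
    rw [insert_union, union_eq_right.2 hAB]
  have h2 : insert x A ∩ B = A := by
    rw [insert_inter_of_notMem hx, inter_eq_left.2 hAB]
  rw [h1, h2] at h
  linarith

lemma marg_subadd {Ω : Type*} [DecidableEq Ω] {f : Finset Ω → ℝ} (hsub : Submodular f)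
    (S T : Finset Ω) :
    f (S ∪ T) - f S ≤ ∑ c ∈ T \ S, (f (insert c S) - f S) := by
  induction T using Finset.induction_on with
  | empty => simp
  | @insert a T ha ih =>
      by_cases haS : a ∈ S
      · have h1 : S ∪ insert a T = S ∪ T := by
          rw [union_insert, insert_eq_self.2 (mem_union_left _ haS)]
        have h2 : insert a T \ S = T \ S := insert_sdiff_of_mem T haS
        rw [h1, h2]; exact ih
      · have h1 : S ∪ insert a T = insert a (S ∪ T) := union_insert a S T
        have h2 : insert a T \ S = insert a (T \ S) := insert_sdiff_of_notMem T haS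
        have haTS : a ∉ T \ S := fun h => ha (mem_sdiff.1 h).1
        have hanB : a ∉ S ∪ T := by
          simp only [mem_union]; tauto
        have hm := marg_anti hsub (subset_union_left (s₂ := T)) hanB (A := S)
        rw [h1, h2, sum_insert haTS]
        linarith

/-- Greedy for the cardinality constraint: `Sseq i` is the set after `i` steps,
    `e i` is the element chosen in step `i+1`. -/
theorem stmt_4 {Ω : Type*} [DecidableEq Ω] [Fintype Ω] (f : Finset Ω → ℝ)
    (hsub : Submodular f) (hnonneg : ∀ X : Finset Ω, 0 ≤ f X) (h0 : f ∅ = 0)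
    (X : Finset Ω) (k : ℕ) (e : ℕ → Ω) (Sseq : ℕ → Finset Ω)
    (hinit : Sseq 0 = ∅)
    (hstep : ∀ i < k, Sseq (i + 1) = insert (e i) (Sseq i))
    (hmem : ∀ i < k, e i ∈ X \ Sseq i)
    (hgreedy : ∀ i < k, ∀ x ∈ X \ Sseq i,
      f (insert x (Sseq i)) - f (Sseq i) ≤ f (insert (e i) (Sseq i)) - f (Sseq i))
    (C : Finset Ω) (hCX : C ⊆ X) (hCk : C.card ≤ k) :
    (1 / 2) * f (Sseq k ∪ C) ≤ f (Sseq k) := by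
  -- monotonicity of the chain
  have hmono : ∀ j, j ≤ k → ∀ i, i ≤ j → Sseq i ⊆ Sseq j := by
    intro j
    induction j with
    | zero => intro _ i hi; rw [Nat.le_zero.1 hi]
    | succ n ih =>
        intro hn i hi
        rcases eq_or_lt_of_le hi with h | h
        swap
        · have h1 : Sseq i ⊆ Sseq n := ih (Nat.le_of_succ_le hn) i (Nat.lt_succ_iff.1 h)
          have h2 : Sseq (n + 1) = insert (e n) (Sseq n) := hstep n hn
          rw [h2]
          exact h1.trans (subset_insert _ _)
        · rw [h]
  -- telescoping
  have htel : ∀ j, j ≤ k → f (Sseq j) = ∑ i ∈ Finset.range j, (f (Sseq (i + 1)) - f (Sseq i)) := by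
    intro j
    induction j with
    | zero => intro _; simp [hinit, h0]
    | succ n ih =>
        intro hn
        rw [Finset.sum_range_succ, ← ih (Nat.le_of_succ_le hn)]
        ring
  rcases Nat.eq_zero_or_pos k with hk | hk
  · subst hk
    have hC : C = ∅ := card_eq_zero.1 (Nat.le_zero.1 hCk)
    rw [hC, hinit]
    simp [h0]
  · -- pick the step with minimal increment
    obtain ⟨j, hjmem, hjmin⟩ := Finset.exists_min_image (Finset.range k)
      (fun i => f (Sseq (i + 1)) - f (Sseq i)) ⟨0, Finset.mem_range.2 hk⟩
    have hjk : j < k := Finset.mem_range.1 hjmem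
    set S := Sseq k with hS
    set δ := f (Sseq (j + 1)) - f (Sseq j) with hδ
    -- each candidate's marginal at S is at most δ
    have hbound : ∀ c ∈ C \ S, f (insert c S) - f S ≤ δ := by
      intro c hc
      rw [mem_sdiff] at hc
      have hcS : c ∉ S := hc.2
      have hjsub : Sseq j ⊆ S := hmono k le_rfl j hjk.le
      have h1 : f (insert c S) - f S ≤ f (insert c (Sseq j)) - f (Sseq j) :=
        marg_anti hsub hjsub hcS
      have hcXj : c ∈ X \ Sseq j := mem_sdiff.2 ⟨hCX hc.1, fun h => hcS (hjsub h)⟩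
      have h2 := hgreedy j hjk c hcXj
      rw [← hstep j hjk] at h2
      linarith
    have hsum : f (S ∪ C) - f S ≤ ∑ c ∈ C \ S, (f (insert c S) - f S) :=
      marg_subadd hsub S C
    have hsum2 : ∑ c ∈ C \ S, (f (insert c S) - f S) ≤ (C \ S).card * δ := by
      calc ∑ c ∈ C \ S, (f (insert c S) - f S) ≤ ∑ _c ∈ C \ S, δ :=
            Finset.sum_le_sum hbound
        _ = (C \ S).card * δ := by rw [Finset.sum_const, nsmul_eq_mul]
    have hcard : ((C \ S).card : ℝ) ≤ (k : ℝ) := by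
      exact_mod_cast le_trans (card_le_card (sdiff_subset)) hCk
    have hfS : f S = ∑ i ∈ Finset.range k, (f (Sseq (i + 1)) - f (Sseq i)) := htel k le_rfl
    have hnn := hnonneg S
    rcases le_or_gt δ 0 with hδ0 | hδ0
    · have : ((C \ S).card : ℝ) * δ ≤ 0 :=
        mul_nonpos_of_nonneg_of_nonpos (Nat.cast_nonneg _) hδ0
      linarith
    · have hkδ : (k : ℝ) * δ ≤ ∑ i ∈ Finset.range k, (f (Sseq (i + 1)) - f (Sseq i)) := by
        have := Finset.card_nsmul_le_sum (Finset.range k)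
          (fun i => f (Sseq (i + 1)) - f (Sseq i)) δ (fun i hi => hjmin i hi)
        rwa [Finset.card_range, nsmul_eq_mul] at this
      have hmδ : ((C \ S).card : ℝ) * δ ≤ (k : ℝ) * δ :=
        mul_le_mul_of_nonneg_right hcard hδ0.le
      linarith
end

section
/- Let f : 2^Ω → ℝ≥0 be submodular with f(∅) = 0. Run the threshold algorithm with parameters (τ, k): process elements in any order and select each element whose marginal value with respect to the current selection is at least τ, stopping after k selections. The returned set S either has |S| = k and f(S) ≥ τ·k, or satisfies f(S) ≥ f(S ∪ C*) − |C*|·τ for every set C* ⊆ Ω. -/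
open Finset

-- One step of the threshold algorithm with parameters `(τ, k)`: add the arriving
-- element if fewer than `k` elements are selected and its marginal value is ≥ τ.
open scoped Classical in
noncomputable def thresholdStep {Ω : Type*} [DecidableEq Ω] (f : Finset Ω → ℝ)
    (τ : ℝ) (k : ℕ) (S : Finset Ω) (e : Ω) : Finset Ω :=
  if S.card < k ∧ τ ≤ f (insert e S) - f S then insert e S else S

/-! If the run ends with fewer than `k` elements, every element outside the output `S` was
rejected against some earlier selection `B ⊆ S`; by diminishing returns its marginal value at `S`
is then below `τ`, and adding the elements of `C` one at a time costs at most `τ` each.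
Otherwise each of the `k` selections raised `f` by at least `τ`. -/

namespace Submodular

variable {Ω : Type*} [DecidableEq Ω] {f : Finset Ω → ℝ}

theorem marginal_le_of_subset (hsub : Submodular f) {B T : Finset Ω} (hBT : B ⊆ T) {e : Ω}
    (he : e ∉ T) : f (insert e T) - f T ≤ f (insert e B) - f B := by
  have h := hsub (insert e B) T
  rw [insert_union, union_eq_right.mpr hBT, insert_inter_of_notMem he,
    inter_eq_left.mpr hBT] at h
  linarith

theorem le_add_card_mul (hsub : Submodular f) {S : Finset Ω} {τ : ℝ} (hτ : 0 ≤ τ)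
    (H : ∀ e ∉ S, f (insert e S) - f S ≤ τ) (D : Finset Ω) :
    f (S ∪ D) ≤ f S + D.card * τ := by
  induction D using Finset.induction_on with
  | empty => simp
  | @insert a D ha ih =>
    rw [card_insert_of_notMem ha, union_insert]
    push_cast
    by_cases haSD : a ∈ S ∪ D
    · rw [insert_eq_of_mem haSD]
      linarith
    · have haS : a ∉ S := fun h => haSD (mem_union_left D h)
      have hmarg := hsub.marginal_le_of_subset subset_union_left haSD
      linarith [H a haS]

end Submodular

section ThresholdAlgorithm

variable {Ω : Type*} [DecidableEq Ω] (f : Finset Ω → ℝ) (τ : ℝ) (k : ℕ)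

theorem subset_thresholdStep (S : Finset Ω) (e : Ω) : S ⊆ thresholdStep f τ k S e := by
  unfold thresholdStep
  split_ifs
  · exact subset_insert e S
  · exact Subset.rfl

theorem subset_foldl_thresholdStep (l : List Ω) (S : Finset Ω) :
    S ⊆ l.foldl (thresholdStep f τ k) S := by
  induction l generalizing S with
  | nil => exact Subset.rfl
  | cons x l ih => exact (subset_thresholdStep f τ k S x).trans (ih _)

theorem card_foldl_thresholdStep_le (l : List Ω) {S : Finset Ω} (hS : S.card ≤ k) :
    (l.foldl (thresholdStep f τ k) S).card ≤ k := by
  induction l generalizing S with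
  | nil => exact hS
  | cons x l ih =>
    apply ih
    unfold thresholdStep
    split_ifs with hc
    · exact (card_insert_le x S).trans hc.1
    · exact hS

theorem mul_card_le_foldl_thresholdStep (hτ : 0 ≤ τ) (l : List Ω) {S : Finset Ω}
    (hS : τ * S.card ≤ f S) :
    τ * (l.foldl (thresholdStep f τ k) S).card ≤ f (l.foldl (thresholdStep f τ k) S) := by
  induction l generalizing S with
  | nil => exact hS
  | cons x l ih =>
    apply ih
    unfold thresholdStep
    split_ifs with hc
    · have hcard : ((insert x S).card : ℝ) ≤ S.card + 1 := by
        exact_mod_cast card_insert_le x S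
      nlinarith [hc.2]
    · exact hS

theorem exists_subset_marginal_lt_of_notMem_foldl (l : List Ω) (S : Finset Ω) {e : Ω}
    (hel : e ∈ l) (he : e ∉ l.foldl (thresholdStep f τ k) S)
    (hcard : (l.foldl (thresholdStep f τ k) S).card < k) :
    ∃ B ⊆ l.foldl (thresholdStep f τ k) S, f (insert e B) - f B < τ := by
  induction l generalizing S with
  | nil => exact absurd hel List.not_mem_nil
  | cons x l ih =>
    rw [List.foldl_cons] at he hcard ⊢
    rcases List.mem_cons.mp hel with rfl | hel
    · have hsub := subset_foldl_thresholdStep f τ k l (thresholdStep f τ k S e)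
      by_cases hc : S.card < k ∧ τ ≤ f (insert e S) - f S
      · refine absurd (hsub ?_) he
        rw [thresholdStep, if_pos hc]
        exact mem_insert_self e S
      · rw [thresholdStep, if_neg hc] at hsub hcard ⊢
        push Not at hc
        exact ⟨S, hsub, hc ((card_le_card hsub).trans_lt hcard)⟩
    · exact ih _ hel he hcard

theorem marginal_foldl_thresholdStep_lt (hsub : Submodular f) (l : List Ω)
    (S : Finset Ω) {e : Ω} (hel : e ∈ l) (he : e ∉ l.foldl (thresholdStep f τ k) S)
    (hcard : (l.foldl (thresholdStep f τ k) S).card < k) :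
    f (insert e (l.foldl (thresholdStep f τ k) S)) - f (l.foldl (thresholdStep f τ k) S) < τ := by
  obtain ⟨B, hB, hlt⟩ := exists_subset_marginal_lt_of_notMem_foldl f τ k l S hel he hcard
  exact (hsub.marginal_le_of_subset hB he).trans_lt hlt

end ThresholdAlgorithm

theorem stmt_6_general {Ω : Type*} [DecidableEq Ω] (f : Finset Ω → ℝ)
    (hsub : Submodular f) (h0 : f ∅ = 0)
    (τ : ℝ) (hτ : 0 < τ) (k : ℕ) (L : List Ω)
    (hall : ∀ x : Ω, x ∈ L)
    (S : Finset Ω) (hS : S = L.foldl (thresholdStep f τ k) ∅) :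
    (S.card = k ∧ τ * k ≤ f S) ∨
      (∀ C : Finset Ω, f (S ∪ C) - (C.card : ℝ) * τ ≤ f S) := by
  subst hS
  rcases (card_foldl_thresholdStep_le f τ k L (card_empty.trans_le k.zero_le)).eq_or_lt
    with hk | hk
  · refine Or.inl ⟨hk, ?_⟩
    have hval := mul_card_le_foldl_thresholdStep f τ k hτ.le L (S := ∅) (by simp [h0])
    rwa [hk] at hval
  · refine Or.inr fun C => ?_
    have hmarg : ∀ e ∉ L.foldl (thresholdStep f τ k) ∅, _ := fun e he =>
      (marginal_foldl_thresholdStep_lt f τ k hsub L ∅ (hall e) he hk).le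
    linarith [hsub.le_add_card_mul hτ.le hmarg C]

theorem stmt_6 {Ω : Type*} [DecidableEq Ω] [Fintype Ω] (f : Finset Ω → ℝ)
    (hsub : Submodular f) (hnonneg : ∀ X : Finset Ω, 0 ≤ f X) (h0 : f ∅ = 0)
    (τ : ℝ) (hτ : 0 < τ) (k : ℕ) (L : List Ω) (hnodup : L.Nodup)
    (hall : ∀ x : Ω, x ∈ L)
    (S : Finset Ω) (hS : S = L.foldl (thresholdStep f τ k) ∅) :
    (S.card = k ∧ τ * k ≤ f S) ∨
      (∀ C : Finset Ω, f (S ∪ C) - (C.card : ℝ) * τ ≤ f S) :=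
  stmt_6_general f hsub h0 τ hτ k L hall S hS
end

section
/- Let f : 2^Ω → ℝ≥0 be submodular with f(∅) = 0, and order a set C = {j₁, j₂, …, j_t} greedily so that each j_k maximizes the marginal value with respect to {j₁,…,j_{k−1}}. Let Y = {j₁, j₂, j₃}. Then for any k ≥ 4 and any Z ⊆ Ω \ (Y ∪ {j_k}), 3·(f(Y ∪ Z ∪ {j_k}) − f(Y ∪ Z)) ≤ f(Y). -/
/-!
For `k < 3`, the greedy choice of `j k` and diminishing returns give
`f(Y ∪ Z ∪ {j a}) - f(Y ∪ Z) ≤ f(S k ∪ {j a}) - f(S k) ≤ f(S (k+1)) - f(S k)`,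
where `S k = {j 0, …, j (k-1)} ⊆ Y`; summing over `k` telescopes to `f Y - f ∅ = f Y`.
-/

open Finset

section

variable {Ω : Type*} [DecidableEq Ω] {t : ℕ} (j : Fin t → Ω)

theorem Submodular.sub_le_sub_of_subset {f : Finset Ω → ℝ} (hf : Submodular f)
    {A T : Finset Ω} {x : Ω} (hAT : A ⊆ T) (hx : x ∉ T) :
    f (insert x T) - f T ≤ f (insert x A) - f A := by
  have h := hf (insert x A) T
  rw [insert_union, union_eq_right.2 hAT, insert_inter_of_notMem hx,
    inter_eq_left.2 hAT] at h
  linarith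

def initialSegment (k : ℕ) : Finset Ω :=
  (univ.filter fun i : Fin t => (i : ℕ) < k).image j

@[simp]
theorem initialSegment_zero : initialSegment j 0 = ∅ := by
  simp [initialSegment]

theorem insert_initialSegment {k : ℕ} (hk : k < t) :
    insert (j ⟨k, hk⟩) (initialSegment j k) = initialSegment j (k + 1) := by
  rw [initialSegment, initialSegment, ← image_insert]
  congr 1
  ext i
  simp only [mem_insert, mem_filter, mem_univ, true_and, Fin.ext_iff]
  omega

theorem initialSegment_mono : Monotone (initialSegment j) := fun _ _ hkm =>
  image_subset_image fun i hi => by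
    simp only [mem_filter, mem_univ, true_and] at hi ⊢
    omega

theorem apply_notMem_initialSegment (hj : Function.Injective j) {a : Fin t} {k : ℕ}
    (hk : k ≤ a) : j a ∉ initialSegment j k := by
  simp only [initialSegment, mem_image, mem_filter, mem_univ, true_and, hj.eq_iff]
  rintro ⟨i, hi, rfl⟩
  omega

def IsGreedyOrder (f : Finset Ω → ℝ) : Prop :=
  ∀ a b : Fin t, a ≤ b →
    f (insert (j b) (initialSegment j a)) - f (initialSegment j a) ≤
      f (insert (j a) (initialSegment j a)) - f (initialSegment j a)

theorem IsGreedyOrder.mul_marginal_le {f : Finset Ω → ℝ} (hg : IsGreedyOrder j f)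
    (hf : Submodular f) {a : Fin t} {m : ℕ} (hm : m ≤ a) {T : Finset Ω}
    (hT : initialSegment j m ⊆ T) (ha : j a ∉ T) :
    m * (f (insert (j a) T) - f T) ≤ f (initialSegment j m) - f ∅ := by
  induction m with
  | zero => simp
  | succ m ih =>
    have hmt : m < t := by omega
    have ih := ih (by omega) ((initialSegment_mono j m.le_succ).trans hT)
    have hdim := hf.sub_le_sub_of_subset ((initialSegment_mono j m.le_succ).trans hT) ha
    have hgreedy := hg ⟨m, hmt⟩ a (Fin.le_def.2 (show m ≤ a by omega))
    rw [insert_initialSegment j hmt] at hgreedy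
    push_cast
    linarith

end

theorem stmt_10_general {Ω : Type*} [DecidableEq Ω] [Fintype Ω] (f : Finset Ω → ℝ)
    (hsub : Submodular f) (h0 : f ∅ = 0)
    (t : ℕ) (j : Fin t → Ω) (hj : Function.Injective j)
    -- the ordering of C = {j 0, …, j (t-1)} is greedy: each element maximizes the
    -- marginal value with respect to the set of its predecessors
    (hgreedy : ∀ a b : Fin t, a ≤ b →
      f (insert (j b) ((Finset.univ.filter (fun i : Fin t => i < a)).image j)) -
          f ((Finset.univ.filter (fun i : Fin t => i < a)).image j) ≤
        f (insert (j a) ((Finset.univ.filter (fun i : Fin t => i < a)).image j)) -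
          f ((Finset.univ.filter (fun i : Fin t => i < a)).image j))
    (Y : Finset Ω) (hY : Y = (Finset.univ.filter (fun i : Fin t => (i : ℕ) < 3)).image j) :
    ∀ a : Fin t, 3 ≤ (a : ℕ) → ∀ Z : Finset Ω, Z ⊆ Finset.univ \ (Y ∪ {j a}) →
      3 * (f (Y ∪ Z ∪ {j a}) - f (Y ∪ Z)) ≤ f Y := by
  intro a ha Z hZ
  have hYseg : Y = initialSegment j 3 := hY
  have hjaY : j a ∉ Y := hYseg ▸ apply_notMem_initialSegment j hj ha
  have hjaZ : j a ∉ Z := fun h => by simpa using hZ h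
  have key := IsGreedyOrder.mul_marginal_le j hgreedy hsub ha (T := Y ∪ Z)
    (hYseg ▸ subset_union_left) (by simp [hjaY, hjaZ])
  rw [← hYseg, h0] at key
  rw [union_singleton]
  exact_mod_cast key.trans_eq (sub_zero _)

theorem stmt_10 {Ω : Type*} [DecidableEq Ω] [Fintype Ω] (f : Finset Ω → ℝ)
    (hsub : Submodular f) (hnonneg : ∀ X : Finset Ω, 0 ≤ f X) (h0 : f ∅ = 0)
    (t : ℕ) (ht : 4 ≤ t) (j : Fin t → Ω) (hj : Function.Injective j)
    -- the ordering of C = {j 0, …, j (t-1)} is greedy: each element maximizes the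
    -- marginal value with respect to the set of its predecessors
    (hgreedy : ∀ a b : Fin t, a ≤ b →
      f (insert (j b) ((Finset.univ.filter (fun i : Fin t => i < a)).image j)) -
          f ((Finset.univ.filter (fun i : Fin t => i < a)).image j) ≤
        f (insert (j a) ((Finset.univ.filter (fun i : Fin t => i < a)).image j)) -
          f ((Finset.univ.filter (fun i : Fin t => i < a)).image j))
    (Y : Finset Ω) (hY : Y = (Finset.univ.filter (fun i : Fin t => (i : ℕ) < 3)).image j) :
    ∀ a : Fin t, 3 ≤ (a : ℕ) → ∀ Z : Finset Ω, Z ⊆ Finset.univ \ (Y ∪ {j a}) →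
      3 * (f (Y ∪ Z ∪ {j a}) - f (Y ∪ Z)) ≤ f Y :=
  stmt_10_general f hsub h0 t j hj hgreedy Y hY
end

section
/- Two-pass threshold guarantee with matroid constraint: let M = (Ω, I) be a matroid, f non-negative submodular with f(∅) = 0, and run the two-set threshold algorithm with threshold ετ: process elements in any order, adding e to S₁ if its marginal to S₁ is ≥ ετ and S₁ + e ∈ I, else to S₂ under the same conditions. If |S₁|, |S₂| < |C*_τ|/4 for a set C*_τ ∈ I whose greedy marginals are all ≥ τ, then there exists A ⊆ C*_τ disjoint from S₁ ∪ S₂ with |A| ≥ |C*_τ|/2 such that S₁ ∪ A ∈ I and S₂ ∪ A ∈ I, and f(S₁) + f(S₂) ≥ (1 − 2ε)·τ·|A|. -/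
/-!
Augmenting `S₁` from `Cτ`, and then `S₂` from the elements so added, gives `A ⊆ Cτ` disjoint
from `S₁ ∪ S₂` with `S₁ ∪ A`, `S₂ ∪ A` independent and `|A| ≥ |Cτ| - |S₁| - |S₂| > |Cτ| / 2`.
Every `e ∈ A` was rejected by both sets when it arrived, although adding it to either of them kept
it independent (the final set plus `e` is); so its marginal there was below `ετ`, and by
submodularity so is its marginal to the final `Sᵢ`. Hence `f (Sᵢ ∪ A) ≤ f Sᵢ + ετ|A|`, while,
`S₁` and `S₂` being disjoint, submodularity and nonnegativity give
`τ|A| ≤ f A ≤ f (S₁ ∪ A) + f (S₂ ∪ A)`.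
-/

open Finset

/-- `Indep` defines a matroid: contains `∅`, downward closed, exchange property. -/
def IsMatroid {Ω : Type*} [DecidableEq Ω] (Indep : Finset Ω → Prop) : Prop :=
  Indep ∅ ∧ (∀ A B : Finset Ω, Indep A → B ⊆ A → Indep B) ∧
    ∀ A B : Finset Ω, Indep A → Indep B → A.card < B.card →
      ∃ x ∈ B \ A, Indep (insert x A)

-- One step of the two-set threshold algorithm with threshold `θ`:
-- try to add the arriving element to `S₁`, else to `S₂`, else discard it.
open scoped Classical in
noncomputable def twoStep {Ω : Type*} [DecidableEq Ω] (f : Finset Ω → ℝ)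
    (Indep : Finset Ω → Prop) (θ : ℝ) (P : Finset Ω × Finset Ω) (e : Ω) :
    Finset Ω × Finset Ω :=
  if Indep (insert e P.1) ∧ θ ≤ f (insert e P.1) - f P.1 then (insert e P.1, P.2)
  else if Indep (insert e P.2) ∧ θ ≤ f (insert e P.2) - f P.2 then (P.1, insert e P.2)
  else P

section Submodular

variable {Ω : Type*} [DecidableEq Ω] {f : Finset Ω → ℝ}

theorem Submodular.marginal_antitone (hsub : Submodular f) {S T : Finset Ω} {e : Ω}
    (hTS : T ⊆ S) (he : e ∉ S) :
    f (insert e S) - f S ≤ f (insert e T) - f T := by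
  have h := hsub S (insert e T)
  rw [union_insert, union_eq_left.mpr hTS, inter_insert_of_notMem he,
    inter_eq_right.mpr hTS] at h
  linarith

theorem Submodular.le_add_card_mul_s15 (hsub : Submodular f) {S A : Finset Ω} {c : ℝ}
    (hc : ∀ e ∈ A, f (insert e S) - f S ≤ c) :
    f (S ∪ A) ≤ f S + A.card * c := by
  induction A using Finset.induction_on with
  | empty => simp
  | @insert a A ha ih =>
    have key := hsub (S ∪ A) (insert a S)
    have hunion : S ∪ A ∪ insert a S = S ∪ insert a A := by grind
    have hinter : (S ∪ A) ∩ insert a S = S := by grind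
    rw [hunion, hinter] at key
    have hrec := ih fun e he => hc e (mem_insert_of_mem he)
    have hca := hc a (mem_insert_self a A)
    rw [card_insert_of_notMem ha]
    push_cast
    linarith

theorem Submodular.le_add_of_disjoint (hsub : Submodular f) (hnonneg : ∀ X, 0 ≤ f X)
    {S₁ S₂ : Finset Ω} (hS : Disjoint S₁ S₂) (A : Finset Ω) :
    f A ≤ f (S₁ ∪ A) + f (S₂ ∪ A) := by
  have h := hsub (S₁ ∪ A) (S₂ ∪ A)
  rw [← inter_union_distrib_right, disjoint_iff_inter_eq_empty.mp hS, empty_union] at h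
  linarith [hnonneg (S₁ ∪ A ∪ (S₂ ∪ A))]

theorem Submodular.mul_card_le_of_chain (hsub : Submodular f) (h0 : f ∅ = 0) {n : ℕ} {τ : ℝ}
    {C : ℕ → Finset Ω} {x : Fin n → Ω} (hC0 : C 0 = ∅)
    (hCsucc : ∀ k : Fin n, C (k + 1) = insert (x k) (C k)) (hx : ∀ k : Fin n, x k ∉ C k)
    (hmarg : ∀ k : Fin n, τ ≤ f (C (k + 1)) - f (C k)) {A : Finset Ω} (hA : A ⊆ C n) :
    τ * A.card ≤ f A := by
  suffices ∀ k ≤ n, ∀ A ⊆ C k, τ * A.card ≤ f A from this n le_rfl A hA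
  intro k
  induction k with
  | zero => intro _ A hA; simp [subset_empty.mp (hC0 ▸ hA), h0]
  | succ k ih =>
    intro hk A hA
    have hk' : k ≤ n := by omega
    obtain ⟨j, rfl⟩ : ∃ j : Fin n, (j : ℕ) = k := ⟨⟨k, hk⟩, rfl⟩
    have hstep := hmarg j
    rw [hCsucc j] at hA hstep
    by_cases hxA : x j ∈ A
    · have hrest : A.erase (x j) ⊆ C j := subset_insert_iff.mp hA
      have hgain : f (insert (x j) (C j)) - f (C j) ≤ f A - f (A.erase (x j)) := by
        simpa only [insert_erase hxA] using hsub.marginal_antitone hrest (hx j)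
      have hcard : (A.card : ℝ) = (A.erase (x j)).card + 1 := by
        rw [card_erase_of_mem hxA, Nat.cast_pred (card_pos.mpr ⟨_, hxA⟩)]; ring
      rw [hcard]
      linarith [ih hk' _ hrest]
    · exact ih hk' A ((subset_insert_iff_of_notMem hxA).mp hA)

theorem Submodular.mul_card_le_of_greedy (hsub : Submodular f) (h0 : f ∅ = 0) {m : ℕ} {τ : ℝ}
    {g : Fin m → Ω} (hg : Function.Injective g) {pref : ℕ → Finset Ω}
    (hpref : ∀ j : ℕ, pref j = (univ.filter (fun i : Fin m => (i : ℕ) < j)).image g)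
    (hmarg : ∀ j : Fin m, τ ≤ f (pref ((j : ℕ) + 1)) - f (pref (j : ℕ)))
    {A : Finset Ω} (hA : A ⊆ pref m) : τ * A.card ≤ f A := by
  refine hsub.mul_card_le_of_chain h0 (x := g) ?_ (fun k => ?_) (fun k => ?_) hmarg hA
  · simp [hpref]
  · ext y
    simp only [hpref, mem_image, mem_filter, mem_univ, true_and, mem_insert]
    constructor
    · rintro ⟨i, hi, rfl⟩
      rcases Nat.lt_succ_iff_lt_or_eq.mp hi with hi | hi
      · exact Or.inr ⟨i, hi, rfl⟩
      · exact Or.inl (congrArg g (Fin.ext hi))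
    · rintro (rfl | ⟨i, hi, rfl⟩)
      exacts [⟨k, k.val.lt_succ_self, rfl⟩, ⟨i, hi.trans k.val.lt_succ_self, rfl⟩]
  · simp [hpref, hg.eq_iff]

end Submodular

section Matroid

variable {Ω : Type*} [DecidableEq Ω] {Indep : Finset Ω → Prop}

theorem IsMatroid.exists_augment (hM : IsMatroid Indep) {S B : Finset Ω} (hS : Indep S)
    (hB : Indep B) :
    ∃ A ⊆ B, Disjoint A S ∧ Indep (S ∪ A) ∧ B.card ≤ S.card + A.card := by
  classical
  obtain ⟨A, hA, hmax⟩ := exists_max_image ((B \ S).powerset.filter (fun A => Indep (S ∪ A)))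
    card ⟨∅, by simpa using hS⟩
  rw [mem_filter, mem_powerset, subset_sdiff] at hA
  obtain ⟨⟨hAB, hAS⟩, hAI⟩ := hA
  refine ⟨A, hAB, hAS, hAI, ?_⟩
  by_contra! hlt
  rw [← card_union_of_disjoint hAS.symm] at hlt
  obtain ⟨x, hx, hxI⟩ := hM.2.2 _ B hAI hB hlt
  rw [mem_sdiff, mem_union, not_or] at hx
  have hbig := hmax (insert x A) (by
    rw [mem_filter, mem_powerset, subset_sdiff, union_insert]
    exact ⟨⟨insert_subset hx.1 hAB, disjoint_insert_left.mpr ⟨hx.2.1, hAS⟩⟩, hxI⟩)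
  rw [card_insert_of_notMem hx.2.2] at hbig
  omega

theorem IsMatroid.exists_common_augment (hM : IsMatroid Indep) {S₁ S₂ C : Finset Ω}
    (h₁ : Indep S₁) (h₂ : Indep S₂) (hC : Indep C) :
    ∃ A ⊆ C, Disjoint A S₁ ∧ Disjoint A S₂ ∧ Indep (S₁ ∪ A) ∧ Indep (S₂ ∪ A) ∧
      C.card ≤ S₁.card + S₂.card + A.card := by
  obtain ⟨A₁, hA₁C, hA₁S, hA₁I, hA₁card⟩ := hM.exists_augment h₁ hC
  obtain ⟨A, hAA₁, hAS, hAI, hAcard⟩ :=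
    hM.exists_augment h₂ (hM.2.1 _ _ hA₁I subset_union_right)
  exact ⟨A, hAA₁.trans hA₁C, hA₁S.mono_left hAA₁, hAS,
    hM.2.1 _ _ hA₁I (union_subset_union_right hAA₁), hAI, by omega⟩

end Matroid

section TwoStep

variable {Ω : Type*} [DecidableEq Ω] {f : Finset Ω → ℝ} {Indep : Finset Ω → Prop} {θ : ℝ}

def Accepts (f : Finset Ω → ℝ) (Indep : Finset Ω → Prop) (θ : ℝ) (T : Finset Ω) (e : Ω) : Prop :=
  Indep (insert e T) ∧ θ ≤ f (insert e T) - f T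

theorem le_twoStep (P : Finset Ω × Finset Ω) (e : Ω) : P ≤ twoStep f Indep θ P e := by
  unfold twoStep
  split_ifs <;> simp [Prod.le_def, subset_insert]

theorem twoStep_le_insert (P : Finset Ω × Finset Ω) (e : Ω) :
    twoStep f Indep θ P e ≤ (insert e P.1, insert e P.2) := by
  unfold twoStep
  split_ifs <;> simp [Prod.le_def, subset_insert]

theorem not_accepts_of_notMem_twoStep {P : Finset Ω × Finset Ω} {e : Ω}
    (h₁ : e ∉ (twoStep f Indep θ P e).1) (h₂ : e ∉ (twoStep f Indep θ P e).2) :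
    ¬Accepts f Indep θ P.1 e ∧ ¬Accepts f Indep θ P.2 e := by
  unfold twoStep at h₁ h₂
  split_ifs at h₁ h₂ <;> simp_all [Accepts]

theorem le_foldl_twoStep (L : List Ω) (P : Finset Ω × Finset Ω) :
    P ≤ L.foldl (twoStep f Indep θ) P := by
  induction L generalizing P with
  | nil => exact le_rfl
  | cons a L ih => exact (le_twoStep P a).trans (ih _)

theorem foldl_twoStep_indep (L : List Ω) {P : Finset Ω × Finset Ω} (h₁ : Indep P.1)
    (h₂ : Indep P.2) :
    Indep (L.foldl (twoStep f Indep θ) P).1 ∧ Indep (L.foldl (twoStep f Indep θ) P).2 := by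
  induction L generalizing P with
  | nil => exact ⟨h₁, h₂⟩
  | cons a L ih =>
    apply ih <;> unfold twoStep <;> split_ifs <;> simp_all

theorem foldl_twoStep_disjoint {L : List Ω} (hL : L.Nodup) {P : Finset Ω × Finset Ω}
    (hP : Disjoint P.1 P.2) (hfresh : ∀ x ∈ L, x ∉ P.1 ∧ x ∉ P.2) :
    Disjoint (L.foldl (twoStep f Indep θ) P).1 (L.foldl (twoStep f Indep θ) P).2 := by
  induction L generalizing P with
  | nil => exact hP
  | cons a L ih =>
    obtain ⟨haL, hL⟩ := List.nodup_cons.mp hL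
    have hstep := twoStep_le_insert (f := f) (Indep := Indep) (θ := θ) P a
    refine ih hL ?_ fun x hx => ?_
    · have ha := hfresh a List.mem_cons_self
      unfold twoStep
      split_ifs
      · simpa [disjoint_insert_left] using ⟨ha.2, hP⟩
      · simpa [disjoint_insert_right] using ⟨ha.1, hP⟩
      · exact hP
    · have hxa : x ≠ a := fun h => haL (h ▸ hx)
      have hx' := hfresh x (List.mem_cons_of_mem a hx)
      exact ⟨fun h => by simpa [hxa, hx'] using hstep.1 h,
        fun h => by simpa [hxa, hx'] using hstep.2 h⟩

theorem exists_not_accepts_of_foldl_twoStep {L : List Ω} {P : Finset Ω × Finset Ω} {e : Ω}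
    (he : e ∈ L) (h₁ : e ∉ (L.foldl (twoStep f Indep θ) P).1)
    (h₂ : e ∉ (L.foldl (twoStep f Indep θ) P).2) :
    ∃ T ≤ L.foldl (twoStep f Indep θ) P, ¬Accepts f Indep θ T.1 e ∧ ¬Accepts f Indep θ T.2 e := by
  induction L generalizing P with
  | nil => simp at he
  | cons a L ih =>
    rcases List.mem_cons.mp he with rfl | he
    · have hle := le_foldl_twoStep (f := f) (Indep := Indep) (θ := θ) L (twoStep f Indep θ P e)
      exact ⟨P, (le_twoStep P e).trans hle,
        not_accepts_of_notMem_twoStep (fun h => h₁ (hle.1 h)) (fun h => h₂ (hle.2 h))⟩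
    · exact ih he h₁ h₂

theorem marginal_lt_of_not_accepts (hsub : Submodular f)
    (hdown : ∀ A B : Finset Ω, Indep A → B ⊆ A → Indep B) {S T : Finset Ω} {e : Ω}
    (hTS : T ⊆ S) (he : e ∉ S) (hI : Indep (insert e S)) (hT : ¬Accepts f Indep θ T e) :
    f (insert e S) - f S < θ := by
  have hIT : Indep (insert e T) := hdown _ _ hI (insert_subset_insert e hTS)
  have hlt : f (insert e T) - f T < θ := lt_of_not_ge fun h => hT ⟨hIT, h⟩
  linarith [hsub.marginal_antitone hTS he]

theorem marginal_lt_of_foldl_twoStep (hsub : Submodular f)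
    (hdown : ∀ A B : Finset Ω, Indep A → B ⊆ A → Indep B) {L : List Ω}
    {P : Finset Ω × Finset Ω} {e : Ω} (he : e ∈ L) (h₁ : e ∉ (L.foldl (twoStep f Indep θ) P).1)
    (h₂ : e ∉ (L.foldl (twoStep f Indep θ) P).2)
    (hI₁ : Indep (insert e (L.foldl (twoStep f Indep θ) P).1))
    (hI₂ : Indep (insert e (L.foldl (twoStep f Indep θ) P).2)) :
    f (insert e (L.foldl (twoStep f Indep θ) P).1) - f (L.foldl (twoStep f Indep θ) P).1 < θ ∧
      f (insert e (L.foldl (twoStep f Indep θ) P).2) - f (L.foldl (twoStep f Indep θ) P).2 < θ := by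
  obtain ⟨T, hT, hT₁, hT₂⟩ := exists_not_accepts_of_foldl_twoStep he h₁ h₂
  exact ⟨marginal_lt_of_not_accepts hsub hdown hT.1 h₁ hI₁ hT₁,
    marginal_lt_of_not_accepts hsub hdown hT.2 h₂ hI₂ hT₂⟩

end TwoStep

theorem stmt_15_general {Ω : Type*} [DecidableEq Ω] (f : Finset Ω → ℝ)
    (hsub : Submodular f) (hnonneg : ∀ X : Finset Ω, 0 ≤ f X) (h0 : f ∅ = 0)
    (Indep : Finset Ω → Prop) (hM : IsMatroid Indep)
    (τ ε : ℝ)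
    (L : List Ω) (hnodup : L.Nodup) (hall : ∀ x : Ω, x ∈ L)
    (S₁ S₂ : Finset Ω)
    (hrun : (S₁, S₂) = L.foldl (twoStep f Indep (ε * τ)) (∅, ∅))
    -- `Cτ` is independent and admits a greedy ordering whose marginals are all ≥ τ
    (m : ℕ) (g : Fin m → Ω) (hg : Function.Injective g)
    (pref : ℕ → Finset Ω)
    (hpref : ∀ j : ℕ, pref j = (Finset.univ.filter (fun i : Fin m => (i : ℕ) < j)).image g)
    (hmarg : ∀ j : Fin m, τ ≤ f (pref ((j : ℕ) + 1)) - f (pref (j : ℕ)))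
    (Cτ : Finset Ω) (hCτ : Cτ = pref m) (hCind : Indep Cτ)
    -- both constructed sets are small
    (hS₁ : (S₁.card : ℝ) < (Cτ.card : ℝ) / 4) (hS₂ : (S₂.card : ℝ) < (Cτ.card : ℝ) / 4) :
    ∃ A : Finset Ω, A ⊆ Cτ ∧ Disjoint A (S₁ ∪ S₂) ∧
      (Cτ.card : ℝ) / 2 ≤ (A.card : ℝ) ∧
      Indep (S₁ ∪ A) ∧ Indep (S₂ ∪ A) ∧
      (1 - 2 * ε) * τ * (A.card : ℝ) ≤ f S₁ + f S₂ := by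
  set F := L.foldl (twoStep f Indep (ε * τ)) (∅, ∅)
  obtain ⟨rfl, rfl⟩ : S₁ = F.1 ∧ S₂ = F.2 := Prod.ext_iff.mp hrun
  obtain ⟨hI₁, hI₂⟩ : Indep F.1 ∧ Indep F.2 := foldl_twoStep_indep L hM.1 hM.1
  have hdisj : Disjoint F.1 F.2 := foldl_twoStep_disjoint hnodup (by simp) (by simp)
  obtain ⟨A, hAC, hA₁, hA₂, hAI₁, hAI₂, hcard⟩ := hM.exists_common_augment hI₁ hI₂ hCind
  have hsmall (e : Ω) (he : e ∈ A) :
      f (insert e F.1) - f F.1 < ε * τ ∧ f (insert e F.2) - f F.2 < ε * τ :=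
    marginal_lt_of_foldl_twoStep hsub hM.2.1 (hall e) (disjoint_left.mp hA₁ he)
      (disjoint_left.mp hA₂ he)
      (hM.2.1 _ _ hAI₁ (insert_subset (mem_union_right _ he) subset_union_left))
      (hM.2.1 _ _ hAI₂ (insert_subset (mem_union_right _ he) subset_union_left))
  refine ⟨A, hAC, disjoint_union_right.mpr ⟨hA₁, hA₂⟩, ?_, hAI₁, hAI₂, ?_⟩
  · have : (Cτ.card : ℝ) ≤ F.1.card + F.2.card + A.card := by exact_mod_cast hcard
    linarith
  have hτA := hsub.mul_card_le_of_greedy h0 hg hpref hmarg (hCτ ▸ hAC)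
  have h₁ := hsub.le_add_card_mul_s15 fun e he => (hsmall e he).1.le
  have h₂ := hsub.le_add_card_mul_s15 fun e he => (hsmall e he).2.le
  linarith [hsub.le_add_of_disjoint hnonneg hdisj A]

theorem stmt_15 {Ω : Type*} [DecidableEq Ω] [Fintype Ω] (f : Finset Ω → ℝ)
    (hsub : Submodular f) (hnonneg : ∀ X : Finset Ω, 0 ≤ f X) (h0 : f ∅ = 0)
    (Indep : Finset Ω → Prop) (hM : IsMatroid Indep)
    (τ ε : ℝ) (hτ : 0 < τ) (hε : 0 ≤ ε)
    (L : List Ω) (hnodup : L.Nodup) (hall : ∀ x : Ω, x ∈ L)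
    (S₁ S₂ : Finset Ω)
    (hrun : (S₁, S₂) = L.foldl (twoStep f Indep (ε * τ)) (∅, ∅))
    -- `Cτ` is independent and admits a greedy ordering whose marginals are all ≥ τ
    (m : ℕ) (g : Fin m → Ω) (hg : Function.Injective g)
    (pref : ℕ → Finset Ω)
    (hpref : ∀ j : ℕ, pref j = (Finset.univ.filter (fun i : Fin m => (i : ℕ) < j)).image g)
    (hmarg : ∀ j : Fin m, τ ≤ f (pref ((j : ℕ) + 1)) - f (pref (j : ℕ)))
    (Cτ : Finset Ω) (hCτ : Cτ = pref m) (hCind : Indep Cτ)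
    -- both constructed sets are small
    (hS₁ : (S₁.card : ℝ) < (Cτ.card : ℝ) / 4) (hS₂ : (S₂.card : ℝ) < (Cτ.card : ℝ) / 4) :
    ∃ A : Finset Ω, A ⊆ Cτ ∧ Disjoint A (S₁ ∪ S₂) ∧
      (Cτ.card : ℝ) / 2 ≤ (A.card : ℝ) ∧
      Indep (S₁ ∪ A) ∧ Indep (S₂ ∪ A) ∧
      (1 - 2 * ε) * τ * (A.card : ℝ) ≤ f S₁ + f S₂ :=
  stmt_15_general f hsub hnonneg h0 Indep hM τ ε L hnodup hall S₁ S₂ hrun m g hg pref hpref hmarg Cτ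
    hCτ hCind hS₁ hS₂
end

section
/- Let f be non-negative submodular with f(∅)=0 and suppose the greedy set S₁ satisfies f(S₁) ≥ (1/2)f(S₁ ∪ C*) and the second-round greedy set S₂ ⊆ Ω \ S₁ satisfies f(S₂) ≥ (1/2)f(S₂ ∪ (C* \ S₁)). If additionally f(S₁ ∩ C*) ≤ ε·f(C*), then max(f(S₁), f(S₂)) ≥ ((1 − ε)/4)·f(C*). -/
/-!
Because `S₂` misses `S₁`, the sets `S₁ ∪ C` and `S₂ ∪ (C \ S₁)` meet exactly in `C \ S₁`.
Splitting `C` along `S₁` and applying submodularity twice (discarding the non-negative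
leftover terms) gives `f C ≤ f (S₁ ∩ C) + f (S₁ ∪ C) + f (S₂ ∪ (C \ S₁)) ≤ ε f C + 2 f S₁ + 2 f S₂`.
-/

open Finset

namespace Submodular

variable {Ω : Type*} [DecidableEq Ω] {f : Finset Ω → ℝ}

theorem apply_union_le_add (hf : Submodular f) (hnonneg : ∀ X, 0 ≤ f X) (S T : Finset Ω) :
    f (S ∪ T) ≤ f S + f T := by
  linarith [hf S T, hnonneg (S ∩ T)]

theorem apply_inter_le_add (hf : Submodular f) (hnonneg : ∀ X, 0 ≤ f X) (S T : Finset Ω) :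
    f (S ∩ T) ≤ f S + f T := by
  linarith [hf S T, hnonneg (S ∪ T)]

theorem le_inter_add_union_add_union_sdiff (hf : Submodular f) (hnonneg : ∀ X, 0 ≤ f X)
    {S₁ S₂ : Finset Ω} (hdisj : Disjoint S₁ S₂) (C : Finset Ω) :
    f C ≤ f (S₁ ∩ C) + f (S₁ ∪ C) + f (S₂ ∪ (C \ S₁)) := by
  have hsplit : (S₁ ∩ C) ∪ (C \ S₁) = C := by
    rw [union_comm, inter_comm, sdiff_union_inter]
  have hinter : (S₁ ∪ C) ∩ (S₂ ∪ (C \ S₁)) = C \ S₁ := by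
    ext x
    have : x ∈ S₁ → x ∉ S₂ := fun hx => disjoint_left.mp hdisj hx
    simp only [mem_inter, mem_union, mem_sdiff]
    tauto
  have hsdiff : f (C \ S₁) ≤ f (S₁ ∪ C) + f (S₂ ∪ (C \ S₁)) := by
    simpa only [hinter] using hf.apply_inter_le_add hnonneg (S₁ ∪ C) (S₂ ∪ (C \ S₁))
  calc f C = f ((S₁ ∩ C) ∪ (C \ S₁)) := by rw [hsplit]
    _ ≤ f (S₁ ∩ C) + f (C \ S₁) := hf.apply_union_le_add hnonneg _ _
    _ ≤ f (S₁ ∩ C) + f (S₁ ∪ C) + f (S₂ ∪ (C \ S₁)) := by linarith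

end Submodular

theorem stmt_16_general {Ω : Type*} [DecidableEq Ω] [Fintype Ω] (f : Finset Ω → ℝ)
    (hsub : Submodular f) (hnonneg : ∀ X : Finset Ω, 0 ≤ f X)
    (S₁ S₂ C : Finset Ω) (ε : ℝ)
    (hS₂ : S₂ ⊆ Finset.univ \ S₁)
    (h1 : (1 / 2) * f (S₁ ∪ C) ≤ f S₁)
    (h2 : (1 / 2) * f (S₂ ∪ (C \ S₁)) ≤ f S₂)
    (hcap : f (S₁ ∩ C) ≤ ε * f C) :
    ((1 - ε) / 4) * f C ≤ max (f S₁) (f S₂) := by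
  have hcover := hsub.le_inter_add_union_add_union_sdiff hnonneg
    (disjoint_sdiff.mono_right hS₂) C
  linarith [le_max_left (f S₁) (f S₂), le_max_right (f S₁) (f S₂)]

theorem stmt_16 {Ω : Type*} [DecidableEq Ω] [Fintype Ω] (f : Finset Ω → ℝ)
    (hsub : Submodular f) (hnonneg : ∀ X : Finset Ω, 0 ≤ f X) (h0 : f ∅ = 0)
    (S₁ S₂ C : Finset Ω) (ε : ℝ) (hε0 : 0 ≤ ε) (hε1 : ε ≤ 1)
    (hS₂ : S₂ ⊆ Finset.univ \ S₁)
    (h1 : (1 / 2) * f (S₁ ∪ C) ≤ f S₁)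
    (h2 : (1 / 2) * f (S₂ ∪ (C \ S₁)) ≤ f S₂)
    (hcap : f (S₁ ∩ C) ≤ ε * f C) :
    ((1 - ε) / 4) * f C ≤ max (f S₁) (f S₂) :=
  stmt_16_general f hsub hnonneg S₁ S₂ C ε hS₂ h1 h2 hcap
end
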